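/- arXiv:2502.19141 — 3 statements merged into one kernel-verified Lean document; each statement's English description precedes it below -/
import Mathlib

section
/- Let A ∈ F_q[X] be a nonzero additive polynomial and let j be a positive integer. Then the following are equivalent: (i) A(X) splits completely over F_{q^j} (all roots of A in an algebraic closure of F_q lie in F_{q^j}); (ii) there exists an integer r ≥ 0 such that A(X) divides (X^{q^j} − X)^{q^r} in F_q[X]; (iii) there exist an integer r ≥ 0 and an additive polynomial B ∈ F_q[X] such that B(A(X)) = (X^{q^j} − X)^{q^r}. -/
open Polynomial Filter

/-- A polynomial over a field of characteristic `p` is additive iff every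
monomial with nonzero coefficient has exponent a power of `p`
(equivalently, `A(X) = ∑ aᵢ X^(pⁱ)`). -/
def IsAdditivePoly {F : Type*} [Field F] (p : ℕ) (A : Polynomial F) : Prop :=
  ∀ i : ℕ, A.coeff i ≠ 0 → ∃ h : ℕ, i = p ^ h

/-- `polyIter P n` is the `n`-fold composition `P^{(n)}` of `P` with itself,
with the convention `P^{(0)} = X`. -/
noncomputable def polyIter {F : Type*} [Field F] (P : Polynomial F) (n : ℕ) : Polynomial F :=
  (fun Q => P.comp Q)^[n] Polynomial.X

/-- `SplitsIn P j` : `P` splits completely over `F_{q^j}`, i.e. every root of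
`P` in an algebraic closure of `F` lies in the subfield with `q^j` elements,
where `q = #F`. -/
def SplitsIn {F : Type*} [Field F] [Fintype F] (P : Polynomial F) (j : ℕ) : Prop :=
  ∀ y : AlgebraicClosure F, Polynomial.aeval y P = 0 → y ^ Fintype.card F ^ j = y

/-- `sDeg P n` : the degree over `F_q` of the splitting field of the `n`-th
iterate `P^{(n)}`, i.e. the least positive `j` such that `P^{(n)}` splits
completely in `F_{q^j}`. -/
noncomputable def sDeg {F : Type*} [Field F] [Fintype F] (P : Polynomial F) (n : ℕ) : ℕ :=
  sInf {j : ℕ | 0 < j ∧ SplitsIn (polyIter P n) j}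

section Aux

variable {F : Type*} [Field F] {p : ℕ} [Fact p.Prime] [CharP F p]

lemma isAdd_zero : IsAdditivePoly p (0 : Polynomial F) := by
  intro i hi; simp at hi

lemma isAdd_sub {C D : Polynomial F} (hC : IsAdditivePoly p C) (hD : IsAdditivePoly p D) :
    IsAdditivePoly p (C - D) := by
  intro i hi
  rw [Polynomial.coeff_sub] at hi
  by_cases h : C.coeff i = 0
  · exact hD i (by intro h'; rw [h, h'] at hi; simp at hi)
  · exact hC i h

lemma isAdd_add {C D : Polynomial F} (hC : IsAdditivePoly p C) (hD : IsAdditivePoly p D) :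
    IsAdditivePoly p (C + D) := by
  intro i hi
  rw [Polynomial.coeff_add] at hi
  by_cases h : C.coeff i = 0
  · exact hD i (by intro h'; rw [h, h'] at hi; simp at hi)
  · exact hC i h

lemma isAdd_C_mul {C : Polynomial F} (b : F) (hC : IsAdditivePoly p C) :
    IsAdditivePoly p (Polynomial.C b * C) := by
  intro i hi
  rw [Polynomial.coeff_C_mul] at hi
  exact hC i (fun h => hi (by rw [h, mul_zero]))

lemma isAdd_X_pow (k : ℕ) : IsAdditivePoly p ((Polynomial.X : Polynomial F) ^ p ^ k) := by
  intro i hi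
  rw [Polynomial.coeff_X_pow] at hi
  refine ⟨k, ?_⟩
  by_contra h
  rw [if_neg h] at hi
  exact hi rfl

lemma isAdd_pow_p {C : Polynomial F} (hC : IsAdditivePoly p C) : IsAdditivePoly p (C ^ p) := by
  have hp : 0 < p := (Fact.out : p.Prime).pos
  intro i hi
  rw [← Polynomial.map_frobenius_expand p C, Polynomial.coeff_map, Polynomial.coeff_expand hp] at hi
  split_ifs at hi with hdvd
  · have hne : C.coeff (i / p) ≠ 0 := by
      intro h; rw [h] at hi; simp at hi
    obtain ⟨h, hh⟩ := hC _ hne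
    exact ⟨h + 1, by rw [← Nat.div_mul_cancel hdvd, hh, pow_succ]⟩
  · simp at hi

lemma isAdd_pow_pk {C : Polynomial F} (hC : IsAdditivePoly p C) (k : ℕ) :
    IsAdditivePoly p (C ^ p ^ k) := by
  induction k with
  | zero => simpa using hC
  | succ k ih =>
      have : C ^ p ^ (k + 1) = (C ^ p ^ k) ^ p := by
        rw [← pow_mul, pow_succ]
      rw [this]
      exact isAdd_pow_p ih

lemma isAdd_natDegree_pow {C : Polynomial F} (hC : IsAdditivePoly p C) (h0 : C ≠ 0) :
    ∃ n, C.natDegree = p ^ n := by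
  apply hC
  rw [← Polynomial.leadingCoeff]
  exact Polynomial.leadingCoeff_ne_zero.mpr h0

lemma isAdd_coeff_zero {C : Polynomial F} (hC : IsAdditivePoly p C) : C.coeff 0 = 0 := by
  by_contra h
  obtain ⟨k, hk⟩ := hC 0 h
  exact absurd hk.symm (Nat.pos_iff_ne_zero.mp (pow_pos (Fact.out : p.Prime).pos k))

lemma isAdd_dvd_comp (A B : Polynomial F) (hB : IsAdditivePoly p B) : A ∣ B.comp A := by
  obtain ⟨B₂, hB₂⟩ := Polynomial.X_dvd_iff.mpr (isAdd_coeff_zero hB)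
  rw [hB₂, Polynomial.mul_comp, Polynomial.X_comp]
  exact Dvd.intro _ rfl

/-- Right-division in the twisted polynomial ring: if an additive polynomial
`C` is divisible by an additive polynomial `A`, then `C = B ∘ A` for an
additive `B`. -/
lemma comp_exists (A : Polynomial F) (hA : IsAdditivePoly p A) (hA0 : A ≠ 0) :
    ∀ N (C : Polynomial F), C.natDegree ≤ N → IsAdditivePoly p C → A ∣ C →
      ∃ B, IsAdditivePoly p B ∧ B.comp A = C := by
  have hp1 : 1 < p := (Fact.out : p.Prime).one_lt
  intro N
  induction N with
  | zero =>
      intro C hdeg hC hdvd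
      by_cases h0 : C = 0
      · exact ⟨0, isAdd_zero, by simp [h0]⟩
      · obtain ⟨n, hn⟩ := isAdd_natDegree_pow hC h0
        have := pow_pos (lt_trans one_pos hp1) n
        omega
  | succ N ih =>
      intro C hdeg hC hdvd
      by_cases h0 : C = 0
      · exact ⟨0, isAdd_zero, by simp [h0]⟩
      obtain ⟨n, hn⟩ := isAdd_natDegree_pow hC h0
      obtain ⟨d, hd⟩ := isAdd_natDegree_pow hA hA0
      have hdn : d ≤ n := by
        have h1 := Polynomial.natDegree_le_of_dvd hdvd h0
        rw [hd, hn] at h1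
        exact (Nat.pow_le_pow_iff_right hp1).mp h1
      set k := n - d with hk
      have hAk0 : A ^ p ^ k ≠ 0 := pow_ne_zero _ hA0
      set b := C.leadingCoeff / (A ^ p ^ k).leadingCoeff with hb
      have hb0 : b ≠ 0 :=
        div_ne_zero (Polynomial.leadingCoeff_ne_zero.mpr h0)
          (Polynomial.leadingCoeff_ne_zero.mpr hAk0)
      set D := Polynomial.C b * A ^ p ^ k with hD
      have hD0 : D ≠ 0 := mul_ne_zero (by simpa using hb0) hAk0
      have hDdeg : D.natDegree = C.natDegree := by
        rw [hD, Polynomial.natDegree_C_mul hb0, Polynomial.natDegree_pow, hd, hn,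
          ← pow_add, hk]
        congr 1
        omega
      have hDlc : D.leadingCoeff = C.leadingCoeff := by
        rw [hD, Polynomial.leadingCoeff_mul, Polynomial.leadingCoeff_C, hb,
          div_mul_cancel₀ _ (Polynomial.leadingCoeff_ne_zero.mpr hAk0)]
      have hDadd : IsAdditivePoly p D := isAdd_C_mul b (isAdd_pow_pk hA k)
      have hdvdD : A ∣ D := Dvd.dvd.mul_left (dvd_pow_self A (pow_pos ((Fact.out : p.Prime).pos) k).ne') _
      have hcompD : (Polynomial.C b * Polynomial.X ^ p ^ k).comp A = D := by
        rw [Polynomial.mul_comp, Polynomial.C_comp, Polynomial.X_pow_comp]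
      set C' := C - D with hC'
      have hC'add : IsAdditivePoly p C' := isAdd_sub hC hDadd
      have hC'dvd : A ∣ C' := dvd_sub hdvd hdvdD
      by_cases hC'0 : C' = 0
      · refine ⟨Polynomial.C b * Polynomial.X ^ p ^ k, isAdd_C_mul b (isAdd_X_pow k), ?_⟩
        rw [hcompD]
        have : C = D := by rw [← sub_eq_zero]; exact hC'0
        exact this.symm
      · have hdlt : C'.degree < C.degree := by
          apply Polynomial.degree_sub_lt _ h0 hDlc.symm
          rw [Polynomial.degree_eq_natDegree h0, Polynomial.degree_eq_natDegree hD0, hDdeg]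
        have hle : C'.natDegree ≤ N := by
          have := Polynomial.natDegree_lt_natDegree hC'0 hdlt
          omega
        obtain ⟨B'', hB''add, hB''comp⟩ := ih C' hle hC'add hC'dvd
        refine ⟨Polynomial.C b * Polynomial.X ^ p ^ k + B'',
          isAdd_add (isAdd_C_mul b (isAdd_X_pow k)) hB''add, ?_⟩
        rw [Polynomial.add_comp, hcompD, hB''comp]
        ring

end Aux

theorem splits_iff_dvd_iff_comp (p : ℕ) [Fact p.Prime] (F : Type*) [Field F] [Fintype F]
    [CharP F p] (A : Polynomial F) (hA : IsAdditivePoly p A) (hA0 : A ≠ 0)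
    (j : ℕ) (hj : 0 < j) :
    (SplitsIn A j ↔
      ∃ r : ℕ, A ∣ (Polynomial.X ^ Fintype.card F ^ j - Polynomial.X) ^ Fintype.card F ^ r) ∧
    (SplitsIn A j ↔
      ∃ (r : ℕ) (B : Polynomial F), IsAdditivePoly p B ∧
        B.comp A = (Polynomial.X ^ Fintype.card F ^ j - Polynomial.X) ^ Fintype.card F ^ r) := by
  set q := Fintype.card F with hq
  have hq1 : 1 < q := Fintype.one_lt_card
  obtain ⟨f, hpf, hf⟩ := FiniteField.card F p
  rw [← hq] at hf
  -- the polynomial Φ^{q^r} and its additivity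
  have phi_eq : ∀ r : ℕ, ((Polynomial.X : Polynomial F) ^ q ^ j - Polynomial.X) ^ q ^ r
      = Polynomial.X ^ (q ^ (j + r)) - Polynomial.X ^ (q ^ r) := by
    intro r
    have hqr : (q : ℕ) ^ r = p ^ ((f : ℕ) * r) := by rw [hf, ← pow_mul]
    rw [hqr, sub_pow_char_pow, ← pow_mul, ← hqr, ← pow_add]
  have phi_add : ∀ r : ℕ, IsAdditivePoly p
      (((Polynomial.X : Polynomial F) ^ q ^ j - Polynomial.X) ^ q ^ r) := by
    intro r
    rw [phi_eq r]
    intro i hi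
    rw [Polynomial.coeff_sub, Polynomial.coeff_X_pow, Polynomial.coeff_X_pow] at hi
    by_cases h1 : i = q ^ (j + r)
    · exact ⟨(f : ℕ) * (j + r), by rw [h1, hf, ← pow_mul]⟩
    by_cases h2 : i = q ^ r
    · exact ⟨(f : ℕ) * r, by rw [h2, hf, ← pow_mul]⟩
    rw [if_neg h1, if_neg h2] at hi
    simp at hi
  -- (ii) → (i)
  have easy2 : (∃ r : ℕ, A ∣ ((Polynomial.X : Polynomial F) ^ q ^ j - Polynomial.X) ^ q ^ r) →
      SplitsIn A j := by
    rintro ⟨r, hdvd⟩ y hy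
    obtain ⟨Q, hQ⟩ := hdvd
    have h0 : (Polynomial.aeval y) (((Polynomial.X : Polynomial F) ^ q ^ j
        - Polynomial.X) ^ q ^ r) = 0 := by
      rw [hQ, map_mul, hy, zero_mul]
    rw [map_pow, map_sub, map_pow, Polynomial.aeval_X] at h0
    have h1 : y ^ q ^ j - y = 0 :=
      (pow_eq_zero_iff (pow_pos (lt_trans one_pos hq1) r).ne').mp h0
    rw [sub_eq_zero] at h1
    exact h1
  -- (iii) → (ii)
  have easy1 : (∃ (r : ℕ) (B : Polynomial F), IsAdditivePoly p B ∧
        B.comp A = ((Polynomial.X : Polynomial F) ^ q ^ j - Polynomial.X) ^ q ^ r) →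
      ∃ r : ℕ, A ∣ ((Polynomial.X : Polynomial F) ^ q ^ j - Polynomial.X) ^ q ^ r := by
    rintro ⟨r, B, hB, hcomp⟩
    exact ⟨r, hcomp ▸ isAdd_dvd_comp A B hB⟩
  -- (i) → (ii)
  have main1 : SplitsIn A j →
      ∃ r : ℕ, A ∣ ((Polynomial.X : Polynomial F) ^ q ^ j - Polynomial.X) ^ q ^ r := by
    intro hs
    classical
    refine ⟨A.natDegree, ?_⟩
    set r := A.natDegree
    set K := AlgebraicClosure F
    set φ := algebraMap F K
    rw [← Polynomial.map_dvd_map' φ, Polynomial.map_pow, Polynomial.map_sub,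
      Polynomial.map_pow, Polynomial.map_X]
    set Φ' : Polynomial K := Polynomial.X ^ q ^ j - Polynomial.X with hΦ'
    have hqj1 : 1 < q ^ j := by
      calc 1 < q := hq1
      _ ≤ q ^ j := Nat.le_self_pow hj.ne' q
    have hΦ'0 : Φ' ≠ 0 := by
      intro h
      have h1 : Φ'.coeff 1 = 0 := by rw [h]; simp
      rw [hΦ', Polynomial.coeff_sub, Polynomial.coeff_X_pow, Polynomial.coeff_X_one,
        if_neg (by omega)] at h1
      simp at h1
    have hA'0 : A.map φ ≠ 0 := Polynomial.map_ne_zero hA0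
    apply Polynomial.Splits.dvd_of_roots_le_roots (IsAlgClosed.splits _) hA'0
    rw [Polynomial.roots_pow]
    rw [Multiset.le_iff_count]
    intro α
    rw [Multiset.count_nsmul]
    by_cases hmem : α ∈ (A.map φ).roots
    · have hroot : (Polynomial.aeval α) A = 0 := by
        have := Polynomial.isRoot_of_mem_roots hmem
        rwa [Polynomial.IsRoot, Polynomial.eval_map, ← Polynomial.aeval_def] at this
      have hα : α ^ q ^ j = α := hs α hroot
      have hmemΦ : α ∈ Φ'.roots := by
        rw [Polynomial.mem_roots hΦ'0]
        simp [hΦ', Polynomial.IsRoot, hα]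
      have h1 : 1 ≤ Multiset.count α Φ'.roots := Multiset.one_le_count_iff_mem.mpr hmemΦ
      have h2 : Multiset.count α (A.map φ).roots ≤ q ^ r := by
        calc Multiset.count α (A.map φ).roots ≤ Multiset.card (A.map φ).roots :=
              Multiset.count_le_card _ _
          _ ≤ (A.map φ).natDegree := Polynomial.card_roots' _
          _ = A.natDegree := Polynomial.natDegree_map _
          _ ≤ q ^ r := le_of_lt (Nat.lt_pow_self hq1)
      calc Multiset.count α (A.map φ).roots ≤ q ^ r := h2
        _ = q ^ r * 1 := (mul_one _).symm
        _ ≤ q ^ r * Multiset.count α Φ'.roots := Nat.mul_le_mul_left _ h1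
    · rw [Multiset.count_eq_zero_of_notMem hmem]
      exact Nat.zero_le _
  -- (ii) → (iii)
  have main2 : (∃ r : ℕ, A ∣ ((Polynomial.X : Polynomial F) ^ q ^ j - Polynomial.X) ^ q ^ r) →
      ∃ (r : ℕ) (B : Polynomial F), IsAdditivePoly p B ∧
        B.comp A = ((Polynomial.X : Polynomial F) ^ q ^ j - Polynomial.X) ^ q ^ r := by
    rintro ⟨r, hdvd⟩
    obtain ⟨B, hBadd, hBcomp⟩ := comp_exists A hA hA0
      ((((Polynomial.X : Polynomial F) ^ q ^ j - Polynomial.X) ^ q ^ r).natDegree) _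
      le_rfl (phi_add r) hdvd
    exact ⟨r, B, hBadd, hBcomp⟩
  exact ⟨⟨main1, easy2⟩, ⟨fun hs => main2 (main1 hs), fun h => easy2 (easy1 h)⟩⟩
end

section
/- Let f ∈ F_q[X] be a nonconstant polynomial not divisible by X, and set A(X) = L_f(X), the q-linearized associate of f (which is a separable additive polynomial). Then for every integer n ≥ 1, one has s_A(n) = ord(f^n), i.e., the degree of the splitting field over F_q of the n-th iterate A^{(n)}(X) equals the least positive integer s such that f(X)^n divides X^s − 1. -/
open Polynomial Filter

/-- `polyOrd g` : the order of a polynomial `g` with `g(0) ≠ 0`, i.e. the least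
positive integer `i` such that `g(X)` divides `X^i - 1`. -/
noncomputable def polyOrd {F : Type*} [Field F] (g : Polynomial F) : ℕ :=
  sInf {i : ℕ | 0 < i ∧ g ∣ Polynomial.X ^ i - 1}

/-- `qLin f` : the `q`-linearized associate `L_f(X) = ∑ aᵢ X^(qⁱ)` of
`f(X) = ∑ aᵢ Xⁱ`, where `q = #F`. -/
noncomputable def qLin {F : Type*} [Field F] [Fintype F] (f : Polynomial F) : Polynomial F :=
  ∑ i ∈ Finset.range (f.natDegree + 1),
    Polynomial.C (f.coeff i) * Polynomial.X ^ Fintype.card F ^ i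


section MyAux

noncomputable def myFrob (p : ℕ) [Fact p.Prime] (F : Type*) [Field F] [Fintype F] [CharP F p] :
    AlgebraicClosure F →ₗ[F] AlgebraicClosure F where
  toFun x := x ^ Fintype.card F
  map_add' x y := by
    haveI : CharP (AlgebraicClosure F) p :=
      charP_of_injective_algebraMap (algebraMap F (AlgebraicClosure F)).injective p
    obtain ⟨k, -, hk⟩ := FiniteField.card F p
    rw [hk]
    exact add_pow_char_pow x y p k
  map_smul' c x := by
    simp only [Algebra.smul_def, mul_pow, RingHom.id_apply]
    rw [← map_pow, FiniteField.pow_card]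

variable {F : Type*} [Field F] [Fintype F]

lemma myFrob_pow_apply (p : ℕ) [Fact p.Prime] [CharP F p] (i : ℕ) (y : AlgebraicClosure F) :
    ((myFrob p F) ^ i) y = y ^ Fintype.card F ^ i := by
  induction i with
  | zero => simp
  | succ i ih =>
      rw [pow_succ', Module.End.mul_apply, ih]
      show (y ^ Fintype.card F ^ i) ^ Fintype.card F = _
      rw [← pow_mul, ← pow_succ]

lemma aeval_qLin (p : ℕ) [Fact p.Prime] [CharP F p] (g : Polynomial F) (y : AlgebraicClosure F) :
    aeval y (qLin g) = aeval (myFrob p F) g y := by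
  rw [aeval_eq_sum_range (p := g) (myFrob p F)]
  rw [qLin, map_sum, LinearMap.coe_sum, Finset.sum_apply]
  refine Finset.sum_congr rfl fun i _ => ?_
  rw [map_mul, aeval_C, map_pow, aeval_X, LinearMap.smul_apply, myFrob_pow_apply,
    Algebra.smul_def]

lemma aeval_polyIter (p : ℕ) [Fact p.Prime] [CharP F p] (f : Polynomial F) (n : ℕ)
    (y : AlgebraicClosure F) :
    aeval y (polyIter (qLin f) n) = aeval (myFrob p F) (f ^ n) y := by
  induction n with
  | zero => simp [polyIter]
  | succ n ih =>
      have h : polyIter (qLin f) (n + 1) = (qLin f).comp (polyIter (qLin f) n) := by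
        rw [polyIter, Function.iterate_succ_apply']
        rfl
      rw [h, aeval_comp, ih, aeval_qLin p, pow_succ', map_mul, Module.End.mul_apply]

lemma coeff_qLin_pow (g : Polynomial F) (i : ℕ) (hi : i ≤ g.natDegree) :
    (qLin g).coeff (Fintype.card F ^ i) = g.coeff i := by
  have hq : 2 ≤ Fintype.card F := Fintype.one_lt_card
  rw [qLin, finset_sum_coeff]
  have h : ∀ j ∈ Finset.range (g.natDegree + 1),
      (Polynomial.C (g.coeff j) * Polynomial.X ^ Fintype.card F ^ j).coeff (Fintype.card F ^ i)
      = if j = i then g.coeff j else 0 := by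
    intro j _
    rw [coeff_C_mul, coeff_X_pow]
    by_cases hji : j = i
    · subst hji; simp
    · have hne : Fintype.card F ^ i ≠ Fintype.card F ^ j :=
        fun e => hji (Nat.pow_right_injective hq e).symm
      simp [hji, hne]
  rw [Finset.sum_congr rfl h, Finset.sum_ite_eq' _ i]
  simp [Nat.lt_succ_of_le hi]

lemma natDegree_qLin (g : Polynomial F) (hg : g ≠ 0) :
    (qLin g).natDegree = Fintype.card F ^ g.natDegree := by
  have hq : 1 ≤ Fintype.card F := Fintype.card_pos
  have hlead : (qLin g).coeff (Fintype.card F ^ g.natDegree) ≠ 0 := by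
    rw [coeff_qLin_pow g g.natDegree le_rfl]
    exact mt leadingCoeff_eq_zero.mp hg
  refine le_antisymm ?_ (le_natDegree_of_ne_zero hlead)
  refine (natDegree_sum_le _ _).trans ?_
  rw [Finset.fold_max_le]
  refine ⟨Nat.zero_le _, fun i hi => ?_⟩
  simp only [Function.comp_apply]
  refine (natDegree_mul_le).trans ?_
  simp only [natDegree_C, natDegree_pow, natDegree_X, zero_add, mul_one]
  exact Nat.pow_le_pow_right hq (Nat.lt_succ_iff.mp (Finset.mem_range.mp hi))

lemma qLin_ne_zero (g : Polynomial F) (hg : g ≠ 0) : qLin g ≠ 0 := by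
  intro h
  have h2 := coeff_qLin_pow g g.natDegree le_rfl
  rw [h, coeff_zero] at h2
  exact hg (leadingCoeff_eq_zero.mp h2.symm)

lemma derivative_qLin (g : Polynomial F) : derivative (qLin g) = Polynomial.C (g.coeff 0) := by
  rw [qLin, map_sum]
  rw [Finset.sum_eq_single 0]
  · simp
  · intro i _ hi
    rw [derivative_C_mul_X_pow]
    have h0 : ((Fintype.card F ^ i : ℕ) : F) = 0 := by
      rw [Nat.cast_pow, FiniteField.cast_card_eq_zero, zero_pow hi]
    rw [h0, mul_zero, map_zero, zero_mul]
  · intro h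
    exact absurd (Finset.mem_range.mpr (Nat.succ_pos _)) h

lemma ker_mono_of_dvd (p : ℕ) [Fact p.Prime] [CharP F p] (g h : Polynomial F) (hdvd : g ∣ h)
    (y : AlgebraicClosure F)
    (hy : aeval (myFrob p F) g y = 0) : aeval (myFrob p F) h y = 0 := by
  obtain ⟨c, rfl⟩ := hdvd
  rw [mul_comm, map_mul, Module.End.mul_apply, hy, map_zero]

lemma dvd_of_ker_mono (p : ℕ) [Fact p.Prime] [CharP F p] (g h : Polynomial F)
    (hg0 : g.coeff 0 ≠ 0)
    (hker : ∀ y : AlgebraicClosure F,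
      aeval (myFrob p F) g y = 0 → aeval (myFrob p F) h y = 0) : g ∣ h := by
  classical
  have hg : g ≠ 0 := fun h' => hg0 (by simp [h'])
  have hq : 2 ≤ Fintype.card F := Fintype.one_lt_card
  set u : F := g.leadingCoeff⁻¹ with hu
  have hune : u ≠ 0 := inv_ne_zero (mt leadingCoeff_eq_zero.mp hg)
  set g' : Polynomial F := g * Polynomial.C u with hg'
  have hg'monic : g'.Monic := monic_mul_leadingCoeff_inv hg
  have hg'ne : g' ≠ 0 := hg'monic.ne_zero
  have hkerg' : ∀ y : AlgebraicClosure F,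
      aeval (myFrob p F) g' y = 0 ↔ aeval (myFrob p F) g y = 0 := by
    intro y
    rw [hg', mul_comm g (Polynomial.C u), map_mul, Module.End.mul_apply, aeval_C,
      Module.algebraMap_end_apply, smul_eq_zero]
    simp [hune]
  set r : Polynomial F := h %ₘ g' with hr
  have hkerr : ∀ y : AlgebraicClosure F,
      aeval (myFrob p F) g' y = 0 → aeval (myFrob p F) r y = 0 := by
    intro y hy
    have hdiv : r + g' * (h /ₘ g') = h := modByMonic_add_div h g'
    have h2 := hker y ((hkerg' y).mp hy)
    rw [← hdiv, mul_comm g' (h /ₘ g'), map_add, map_mul, LinearMap.add_apply,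
      Module.End.mul_apply, hy, map_zero, add_zero] at h2
    exact h2
  by_cases hr0 : r = 0
  · have hd : g' ∣ h := (modByMonic_eq_zero_iff_dvd hg'monic).mp hr0
    exact (Dvd.intro _ rfl).trans hd
  · exfalso
    have hrdeg : r.natDegree < g'.natDegree :=
      natDegree_lt_natDegree hr0 (degree_modByMonic_lt h hg'monic)
    set K := AlgebraicClosure F with hK
    set G : Polynomial K := (qLin g').map (algebraMap F K) with hG
    set R : Polynomial K := (qLin r).map (algebraMap F K) with hR
    have hRne : R ≠ 0 := Polynomial.map_ne_zero (qLin_ne_zero r hr0)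
    have hg'c0 : g'.coeff 0 ≠ 0 := by
      rw [hg', coeff_mul_C]
      exact mul_ne_zero hg0 hune
    have hGsep : G.Separable := by
      have hd : derivative G = Polynomial.C (algebraMap F K (g'.coeff 0)) := by
        rw [hG, derivative_map, derivative_qLin, map_C]
      refine ⟨0, Polynomial.C (algebraMap F K (g'.coeff 0))⁻¹, ?_⟩
      rw [hd, zero_mul, zero_add, ← map_mul, inv_mul_cancel₀, map_one]
      exact (map_ne_zero (algebraMap F K)).mpr hg'c0
    have hGroots : Multiset.card G.roots = Fintype.card F ^ g'.natDegree := by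
      rw [splits_iff_card_roots.mp (IsAlgClosed.splits G), hG, natDegree_map,
        natDegree_qLin g' hg'ne]
    have hnodup : G.roots.Nodup := nodup_roots hGsep
    have hsub : G.roots.toFinset ⊆ R.roots.toFinset := by
      intro y hy
      rw [Multiset.mem_toFinset, mem_roots'] at hy ⊢
      refine ⟨hRne, ?_⟩
      have hy2 : aeval (myFrob p F) g' y = 0 := by
        rw [← aeval_qLin, aeval_def, ← eval_map]
        exact hy.2
      have h3 := hkerr y hy2
      rw [← aeval_qLin, aeval_def, ← eval_map] at h3
      exact h3
    have hcard : Fintype.card F ^ g'.natDegree ≤ Fintype.card F ^ r.natDegree := by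
      calc Fintype.card F ^ g'.natDegree = G.roots.toFinset.card := by
            rw [Multiset.toFinset_card_of_nodup hnodup, hGroots]
        _ ≤ R.roots.toFinset.card := Finset.card_le_card hsub
        _ ≤ Multiset.card R.roots := Multiset.toFinset_card_le _
        _ ≤ R.natDegree := card_roots' R
        _ = Fintype.card F ^ r.natDegree := by
            rw [hR, natDegree_map, natDegree_qLin r hr0]
    exact absurd hcard (not_le.mpr (Nat.pow_lt_pow_right hq hrdeg))

end MyAux

theorem sDeg_qLin_eq_ord (p : ℕ) [Fact p.Prime] (F : Type*) [Field F] [Fintype F]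
    [CharP F p] (f : Polynomial F) (hfdeg : 0 < f.natDegree) (hfX : ¬ Polynomial.X ∣ f) :
    ∀ n : ℕ, 1 ≤ n → sDeg (qLin f) n = polyOrd (f ^ n) := by
  intro n hn
  have hq : 2 ≤ Fintype.card F := Fintype.one_lt_card
  have hf0 : f.coeff 0 ≠ 0 := fun h => hfX (X_dvd_iff.mpr h)
  have hfn0 : (f ^ n).coeff 0 ≠ 0 := by
    rw [coeff_zero_eq_eval_zero, eval_pow, ← coeff_zero_eq_eval_zero]
    exact pow_ne_zero n hf0
  have hiff : ∀ j : ℕ, SplitsIn (polyIter (qLin f) n) j ↔ f ^ n ∣ Polynomial.X ^ j - 1 := by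
    intro j
    have hcond : ∀ y : AlgebraicClosure F,
        (y ^ Fintype.card F ^ j = y) ↔ aeval (myFrob p F) (Polynomial.X ^ j - 1 : Polynomial F) y = 0 := by
      intro y
      have hev : aeval (myFrob p F) (Polynomial.X ^ j - 1 : Polynomial F) y
          = y ^ Fintype.card F ^ j - y := by
        rw [map_sub, map_pow, aeval_X, map_one, LinearMap.sub_apply, Module.End.one_apply,
          myFrob_pow_apply p]
      rw [hev, sub_eq_zero]
    constructor
    · intro hsplit
      refine dvd_of_ker_mono p (f ^ n) _ hfn0 fun y hy => ?_
      rw [← hcond]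
      exact hsplit y (by rw [aeval_polyIter p]; exact hy)
    · intro hdvd y hy
      rw [aeval_polyIter p] at hy
      rw [hcond]
      exact ker_mono_of_dvd p _ _ hdvd y hy
  unfold sDeg polyOrd
  congr 1
  ext j
  simp only [Set.mem_setOf_eq, hiff]
end

section
/- Let B ∈ F_q[X] be an additive polynomial of the form B(X) = R(X)^q with R ∈ F_q[X] additive, let M ≥ 1 and r ≥ 0 be integers. Then the following are equivalent: (i) the F_p-linear map z ↦ B(z) on F_{q^M} is nilpotent (some iterate of z ↦ B(z) is the zero map on F_{q^M}); (ii) there exists an integer n ≥ 1 such that X^{q^M} − X divides B^{(n)}(X) in F_q[X]; (iii) there exists an integer m ≥ 1 such that (X^{q^M} − X)^{q^r} divides B^{(m)}(X) in F_q[X]. -/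
open Polynomial Filter

/-- The `F_p`-linear map `z ↦ B(z)` on `F_{q^M}` (realized inside an algebraic
closure of `F` as the subfield of elements fixed by the `M`-th power of the
`q`-Frobenius) is nilpotent: some iterate of it is the zero map. -/
def IsNilpotentOn {F : Type*} [Field F] [Fintype F] (B : Polynomial F) (M : ℕ) : Prop :=
  ∃ n : ℕ, 0 < n ∧ ∀ y : AlgebraicClosure F,
    y ^ Fintype.card F ^ M = y → (fun z => Polynomial.aeval z B)^[n] y = 0

section Aux

variable {F : Type*} [Field F] [Fintype F]

lemma polyIter_succ (P : Polynomial F) (n : ℕ) :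
    polyIter P (n + 1) = P.comp (polyIter P n) := by
  unfold polyIter
  rw [Function.iterate_succ_apply']

lemma aeval_polyIter_s18 {K : Type*} [CommRing K] [Algebra F K] (P : Polynomial F) (n : ℕ) (y : K) :
    aeval y (polyIter P n) = (fun z => aeval z P)^[n] y := by
  induction n with
  | zero => simp [polyIter]
  | succ n ih =>
    rw [polyIter_succ, Function.iterate_succ_apply', ← ih, aeval_comp]

lemma comp_pow_card (p : ℕ) [Fact p.Prime] [CharP F p] (R T : Polynomial F) :
    R.comp (T ^ Fintype.card F) = R.comp T ^ Fintype.card F := by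
  obtain ⟨e, hp, hcard⟩ := FiniteField.card F p
  rw [comp_eq_sum_left, comp_eq_sum_left, Polynomial.sum, Polynomial.sum, hcard,
    sum_pow_char_pow]
  refine Finset.sum_congr rfl fun i _ => ?_
  rw [mul_pow, ← C_pow, ← hcard, FiniteField.pow_card, ← pow_mul, ← pow_mul,
    mul_comm (Fintype.card F) i, mul_comm]

lemma comp_pow_card_pow (p : ℕ) [Fact p.Prime] [CharP F p] (R T : Polynomial F) (k : ℕ) :
    R.comp (T ^ Fintype.card F ^ k) = R.comp T ^ Fintype.card F ^ k := by
  induction k with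
  | zero => simp
  | succ k ih =>
    rw [pow_succ, pow_mul, comp_pow_card p, ih, ← pow_mul, ← pow_succ]

lemma polyIter_pow_card (p : ℕ) [Fact p.Prime] [CharP F p] (R : Polynomial F) (m : ℕ) :
    polyIter (R ^ Fintype.card F) m = polyIter R m ^ Fintype.card F ^ m := by
  induction m with
  | zero => simp [polyIter]
  | succ m ih =>
    rw [polyIter_succ, polyIter_succ, ih, pow_comp, comp_pow_card_pow p, ← pow_mul,
      ← pow_succ]

lemma dvd_of_vanishing (p : ℕ) [Fact p.Prime] [CharP F p] (P : Polynomial F) (N : ℕ)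
    (hN : 2 ≤ N) (hpN : p ∣ N)
    (h : ∀ y : AlgebraicClosure F, y ^ N = y → aeval y P = 0) (hP : P ≠ 0) :
    (X ^ N - X : Polynomial F) ∣ P := by
  set K := AlgebraicClosure F
  set φ := algebraMap F K
  have hmonic : (X ^ N - X : Polynomial F).Monic := by
    apply monic_X_pow_sub
    rw [degree_X]
    exact_mod_cast hN
  have hmapL : (X ^ N - X : Polynomial F).map φ = (X ^ N - X : Polynomial K) := by
    simp
  rw [← map_dvd_map φ φ.injective hmonic, hmapL]
  have hsep : (X ^ N - X : Polynomial K).Separable := galois_poly_separable p N hpN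
  have hL0 : (X ^ N - X : Polynomial K) ≠ 0 := by
    intro hz
    have := hmonic.ne_zero
    rw [← hmapL] at hz
    exact this (map_injective φ φ.injective (by simpa using hz))
  have hsplit : (X ^ N - X : Polynomial K).Splits :=
    IsAlgClosed.splits _
  apply hsplit.dvd_of_roots_le_roots hL0
  rw [Multiset.le_iff_subset (nodup_roots hsep)]
  intro y hy
  rw [mem_roots'] at hy ⊢
  obtain ⟨-, hy⟩ := hy
  have hyN : y ^ N = y := by
    have := hy
    simp only [IsRoot, eval_sub, eval_pow, eval_X] at this
    exact sub_eq_zero.mp this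
  refine ⟨Polynomial.map_ne_zero hP, ?_⟩
  show eval y (P.map φ) = 0
  rw [eval_map, ← aeval_def]
  exact h y hyN

end Aux

theorem nilpotent_iff_dvd_iterate (p : ℕ) [Fact p.Prime] (F : Type*) [Field F] [Fintype F]
    [CharP F p] (R B : Polynomial F) (hR : IsAdditivePoly p R)
    (hB : B = R ^ Fintype.card F) (M : ℕ) (hM : 1 ≤ M) (r : ℕ) :
    (IsNilpotentOn B M ↔
      ∃ n : ℕ, 0 < n ∧
        (Polynomial.X ^ Fintype.card F ^ M - Polynomial.X) ∣ polyIter B n) ∧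
    (IsNilpotentOn B M ↔
      ∃ m : ℕ, 0 < m ∧
        (Polynomial.X ^ Fintype.card F ^ M - Polynomial.X) ^ Fintype.card F ^ r ∣
          polyIter B m) := by
  set K := AlgebraicClosure F
  set q := Fintype.card F with hq
  have hq2 : 2 ≤ q := Fintype.one_lt_card
  have hpq : p ∣ q := by
    obtain ⟨e, hp, hcard⟩ := FiniteField.card F p
    rw [hq, hcard]
    exact dvd_pow_self p e.pos.ne'
  have hpqM : p ∣ q ^ M := hpq.trans (dvd_pow_self q (by omega))
  have hqM2 : 2 ≤ q ^ M := le_trans hq2 (Nat.le_self_pow (by omega) q)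
  set L : Polynomial F := X ^ q ^ M - X with hL
  -- evaluating `L` at a fixed point of the `M`-th Frobenius power gives zero
  have hevalL : ∀ y : K, y ^ q ^ M = y → aeval y L = 0 := by
    intro y hy
    simp [hL, hy]
  -- backward direction: divisibility by `L` implies nilpotency
  have bwd : ∀ n : ℕ, 0 < n → L ∣ polyIter B n → IsNilpotentOn B M := by
    intro n hn ⟨c, hc⟩
    refine ⟨n, hn, fun y hy => ?_⟩
    rw [← aeval_polyIter_s18, hc, map_mul, hevalL y hy, zero_mul]
  -- key forward step
  have key : IsNilpotentOn B M → ∀ r' : ℕ, ∃ m, 0 < m ∧ L ^ q ^ r' ∣ polyIter B m := by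
    rintro ⟨n, hn, hvan⟩ r'
    set m := n + r' with hm
    refine ⟨m, by omega, ?_⟩
    have hvR : ∀ y : K, y ^ q ^ M = y → aeval y (polyIter R m) = 0 := by
      intro y hy
      have h1 : (fun z : K => aeval z B)^[n] y = 0 := hvan y hy
      rw [← aeval_polyIter_s18, hB, polyIter_pow_card p, map_pow] at h1
      have h2 : aeval y (polyIter R n) = 0 := by
        have hne : q ^ n ≠ 0 := by positivity
        exact pow_eq_zero_iff hne |>.mp h1
      rw [aeval_polyIter_s18] at h2 ⊢
      rw [hm, add_comm, Function.iterate_add_apply, h2]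
      apply Function.iterate_fixed
      show aeval (0 : K) R = 0
      have hR0 : R.coeff 0 = 0 := by
        by_contra h0
        obtain ⟨h, hh⟩ := hR 0 h0
        exact absurd hh.symm (pow_ne_zero h (Fact.out (p := p.Prime)).pos.ne')
      calc aeval (0 : K) R = eval 0 (R.map (algebraMap F K)) := by rw [eval_map, ← aeval_def]
        _ = (R.map (algebraMap F K)).coeff 0 := (coeff_zero_eq_eval_zero _).symm
        _ = 0 := by rw [coeff_map, hR0, map_zero]
    by_cases hz : polyIter R m = 0
    · rw [hB, polyIter_pow_card p, hz, zero_pow (by positivity)]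
      exact dvd_zero _
    · have hdvd : L ∣ polyIter R m := dvd_of_vanishing p _ (q ^ M) hqM2 hpqM hvR hz
      have h1 : L ^ q ^ m ∣ (polyIter R m) ^ q ^ m := pow_dvd_pow_of_dvd hdvd _
      rw [← polyIter_pow_card p, ← hB] at h1
      exact (pow_dvd_pow L (Nat.pow_le_pow_right (by omega) (by omega))).trans h1
  constructor
  · constructor
    · intro hnil
      obtain ⟨m, hm, hdvd⟩ := key hnil 0
      rw [pow_zero, pow_one] at hdvd
      exact ⟨m, hm, hdvd⟩
    · rintro ⟨n, hn, hdvd⟩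
      exact bwd n hn hdvd
  · constructor
    · intro hnil
      exact key hnil r
    · rintro ⟨m, hm, hdvd⟩
      exact bwd m hm ((dvd_pow_self L (by positivity)).trans hdvd)
end
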